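/- Let $A$ be a $2\times 2$ real matrix with $\det A = 1$ (unimodular), and let $\hat\theta = (\cos\theta, \sin\theta)$. Then for any two angles $\theta_1, \theta_2$ with $0 < |\theta_1 - \theta_2| \le \pi/2$, the operator norm of $A$ satisfies $\|A\| \le \sin(|\theta_1-\theta_2|/2)^{-1} \max\{\|A\hat\theta_1\|, \|A\hat\theta_2\|\}$. -/
import Mathlib

open Real Matrix

/-- Operator norm of a `2 × 2` real matrix acting on Euclidean `ℝ²`. -/
noncomputable def opNorm (A : Matrix (Fin 2) (Fin 2) ℝ) : ℝ :=
  ‖LinearMap.toContinuousLinearMap (Matrix.toEuclideanLin A)‖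

/-- The unit vector `(cos θ, sin θ)` in Euclidean `ℝ²`. -/
noncomputable def unitVec (θ : ℝ) : EuclideanSpace ℝ (Fin 2) :=
  (WithLp.equiv 2 (Fin 2 → ℝ)).symm ![Real.cos θ, Real.sin θ]

private lemma aux_ineq (p q c : ℝ) (hc0 : 0 ≤ c) (hc1 : c ≤ 1) :
    ((|p| + |q|)) ^ 2 * ((1 - c) / 2) ≤ p ^ 2 + q ^ 2 + 2 * p * q * c := by
  have hpq : -(|p| * |q|) ≤ p * q := by rw [← abs_mul]; exact neg_abs_le _
  have hp2 : |p| ^ 2 = p ^ 2 := sq_abs p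
  have hq2 : |q| ^ 2 = q ^ 2 := sq_abs q
  nlinarith [sq_nonneg (|p| - |q|), mul_nonneg (mul_nonneg (abs_nonneg p) (abs_nonneg q)) hc0,
    mul_nonneg (sq_nonneg (|p| - |q|)) hc0, abs_nonneg p, abs_nonneg q]

private lemma aux_sqrt {a b : ℝ} (ha : 0 ≤ a) (hb : 0 ≤ b) (h : a ^ 2 ≤ b ^ 2) : a ≤ b := by
  nlinarith

theorem stmt0 (A : Matrix (Fin 2) (Fin 2) ℝ) (hA : A.det = 1)
    (θ₁ θ₂ : ℝ) (h0 : 0 < |θ₁ - θ₂|) (h : |θ₁ - θ₂| ≤ π / 2) :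
    opNorm A ≤ (Real.sin (|θ₁ - θ₂| / 2))⁻¹ *
      max ‖Matrix.toEuclideanLin A (unitVec θ₁)‖ ‖Matrix.toEuclideanLin A (unitVec θ₂)‖ := by
  have hπ : (0:ℝ) < π := Real.pi_pos
  set δ := |θ₁ - θ₂| with hδdef
  set M := max ‖Matrix.toEuclideanLin A (unitVec θ₁)‖ ‖Matrix.toEuclideanLin A (unitVec θ₂)‖
    with hMdef
  have hM0 : 0 ≤ M := le_trans (norm_nonneg _) (le_max_left _ _)
  have hsin : 0 < Real.sin (δ / 2) :=
    Real.sin_pos_of_pos_of_lt_pi (by linarith) (by linarith)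
  -- cos δ in terms of θ₁ - θ₂
  have hcδ : Real.cos δ = Real.cos (θ₁ - θ₂) := Real.cos_abs _
  have hc0 : 0 ≤ Real.cos δ :=
    Real.cos_nonneg_of_mem_Icc ⟨by linarith [abs_nonneg (θ₁ - θ₂)], h⟩
  -- |sin (θ₁ - θ₂)| = sin δ
  have hsδ : |Real.sin (θ₁ - θ₂)| = Real.sin δ := by
    rcases abs_cases (θ₁ - θ₂) with ⟨he, hpos⟩ | ⟨he, hneg⟩
    · rw [hδdef, he, abs_of_nonneg (Real.sin_nonneg_of_nonneg_of_le_pi hpos (by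
        rw [← he, ← hδdef]; linarith))]
    · rw [hδdef, he, Real.sin_neg, abs_of_nonpos]
      exact Real.sin_nonpos_of_nonpos_of_neg_pi_le (le_of_lt hneg) (by
        have : -(θ₁ - θ₂) ≤ π / 2 := by rw [← he, ← hδdef]; exact h
        linarith)
  have hsδpos : 0 < Real.sin δ := Real.sin_pos_of_pos_of_lt_pi h0 (by linarith)
  have hhalf : Real.cos δ = 1 - 2 * Real.sin (δ / 2) ^ 2 := by
    have h1 := Real.cos_two_mul (δ / 2)
    have h2 := Real.sin_sq_add_cos_sq (δ / 2)
    rw [show 2 * (δ / 2) = δ by ring] at h1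
    linarith
  rw [opNorm]
  refine ContinuousLinearMap.opNorm_le_bound _ (by positivity) ?_
  intro x
  simp only [LinearMap.coe_toContinuousLinearMap']
  set c₁ := Real.cos θ₁
  set s₁ := Real.sin θ₁
  set c₂ := Real.cos θ₂
  set s₂ := Real.sin θ₂
  set s := Real.sin (θ₁ - θ₂) with hsdef
  have hs_eq : s = s₁ * c₂ - c₁ * s₂ := Real.sin_sub θ₁ θ₂
  have hc_eq : Real.cos (θ₁ - θ₂) = c₁ * c₂ + s₁ * s₂ := Real.cos_sub θ₁ θ₂
  have hs0 : 0 < |s| := by rw [hsdef, hsδ]; exact hsδpos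
  set p := x 1 * c₂ - x 0 * s₂ with hpdef
  set q := x 0 * s₁ - x 1 * c₁ with hqdef
  have e0 : s * x 0 = p * c₁ + q * c₂ := by rw [hs_eq, hpdef, hqdef]; ring
  have e1 : s * x 1 = p * s₁ + q * s₂ := by rw [hs_eq, hpdef, hqdef]; ring
  have py1 : s₁ ^ 2 + c₁ ^ 2 = 1 := Real.sin_sq_add_cos_sq θ₁
  have py2 : s₂ ^ 2 + c₂ ^ 2 = 1 := Real.sin_sq_add_cos_sq θ₂
  -- vector identity
  have hx : s • x = p • unitVec θ₁ + q • unitVec θ₂ := by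
    ext i
    fin_cases i
    · simpa [unitVec] using e0
    · simpa [unitVec] using e1
  have hAx : s • (Matrix.toEuclideanLin A x)
      = p • (Matrix.toEuclideanLin A (unitVec θ₁)) + q • (Matrix.toEuclideanLin A (unitVec θ₂)) := by
    rw [← (Matrix.toEuclideanLin A).map_smul, hx, (Matrix.toEuclideanLin A).map_add,
      (Matrix.toEuclideanLin A).map_smul, (Matrix.toEuclideanLin A).map_smul]
  have hAbound : |s| * ‖Matrix.toEuclideanLin A x‖ ≤ (|p| + |q|) * M := by
    calc |s| * ‖Matrix.toEuclideanLin A x‖ = ‖s • (Matrix.toEuclideanLin A x)‖ := by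
          rw [norm_smul, Real.norm_eq_abs]
      _ = ‖p • (Matrix.toEuclideanLin A (unitVec θ₁)) + q • (Matrix.toEuclideanLin A (unitVec θ₂))‖ := by
          rw [hAx]
      _ ≤ |p| * ‖Matrix.toEuclideanLin A (unitVec θ₁)‖ + |q| * ‖Matrix.toEuclideanLin A (unitVec θ₂)‖ := by
          refine le_trans (norm_add_le _ _) ?_
          rw [norm_smul, norm_smul, Real.norm_eq_abs, Real.norm_eq_abs]
      _ ≤ |p| * M + |q| * M := by
          gcongr
          · exact le_max_left _ _
          · exact le_max_right _ _
      _ = (|p| + |q|) * M := by ring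
  -- norm of x
  have hxnorm : ‖x‖ ^ 2 = (x 0) ^ 2 + (x 1) ^ 2 := by
    rw [EuclideanSpace.norm_eq, Real.sq_sqrt (by positivity)]
    simp [Fin.sum_univ_two, sq_abs]
  set c := Real.cos δ with hcdef
  have hc1 : c = c₁ * c₂ + s₁ * s₂ := hcδ.trans hc_eq
  -- key identity: s² ‖x‖² = p² + q² + 2pqc
  have hiden : s ^ 2 * ((x 0) ^ 2 + (x 1) ^ 2) = p ^ 2 + q ^ 2 + 2 * p * q * c := by
    rw [hc1]
    linear_combination (s * x 0 + (p * c₁ + q * c₂)) * e0 + (s * x 1 + (p * s₁ + q * s₂)) * e1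
      + p ^ 2 * py1 + q ^ 2 * py2
  -- key inequality (squared)
  have hkey2 : ((|p| + |q|) * Real.sin (δ / 2)) ^ 2 ≤ (|s| * ‖x‖) ^ 2 := by
    have hss : (|s| * ‖x‖) ^ 2 = p ^ 2 + q ^ 2 + 2 * p * q * c := by
      rw [mul_pow, sq_abs, hxnorm, hiden]
    rw [hss]
    have hsq : Real.sin (δ / 2) ^ 2 = (1 - c) / 2 := by rw [hcdef] at hhalf ⊢; linarith
    rw [mul_pow, hsq]
    have hcle : c ≤ 1 := by rw [hcdef]; exact Real.cos_le_one _
    exact aux_ineq p q c hc0 hcle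
  have hkey : (|p| + |q|) * Real.sin (δ / 2) ≤ |s| * ‖x‖ := by
    exact aux_sqrt (by positivity) (by positivity) hkey2
  -- conclude
  rw [show (Real.sin (δ / 2))⁻¹ * M * ‖x‖ = (M * ‖x‖) / Real.sin (δ / 2) by ring,
    le_div_iff₀ hsin]
  have hfinal : |s| * (‖Matrix.toEuclideanLin A x‖ * Real.sin (δ / 2)) ≤ |s| * (M * ‖x‖) := by
    calc |s| * (‖Matrix.toEuclideanLin A x‖ * Real.sin (δ / 2))
        = (|s| * ‖Matrix.toEuclideanLin A x‖) * Real.sin (δ / 2) := by ring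
      _ ≤ ((|p| + |q|) * M) * Real.sin (δ / 2) :=
          mul_le_mul_of_nonneg_right hAbound hsin.le
      _ = ((|p| + |q|) * Real.sin (δ / 2)) * M := by ring
      _ ≤ (|s| * ‖x‖) * M := mul_le_mul_of_nonneg_right hkey hM0
      _ = |s| * (M * ‖x‖) := by ring
  exact le_of_mul_le_mul_left hfinal hs0
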